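/- arXiv:1902.08259 — 5 statements merged into one kernel-verified Lean document; each statement's English description precedes it below -/
import Mathlib

section
/- There exists a constant c > 0 such that for all positive real numbers δ₁, δ₂ and every integer n ≥ 3, there exists a set P of n points in ℝ² spanning at least c·n² 2-chains (hinges) with respect to (δ₁, δ₂). Consequently C₂(n) = Ω(n²), and combined with the matching upper bound, C₂(n) = Θ(n²). -/
/-!
Put `n - 1` points on two circles centred at a common point `o`, about half of them on the circle
of radius `δ₁` and the rest on the circle of radius `δ₂`, and add `o` itself. Every pair `(a, b)`
with `a` on the first circle and `b` on the second gives the hinge `(a, o, b)`, so there are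
about `(n / 2) ^ 2` hinges.
-/

/-- The number of `k`-chains spanned by a finite point set `P` in `ℝ^d` with respect to a
sequence of distances `δ : Fin k → ℝ`: tuples `(p 0, …, p k)` of pairwise distinct points of
`P` with `dist (p j) (p (j+1)) = δ j` for all `j`. -/
noncomputable def chainCount (d k : ℕ) (P : Finset (EuclideanSpace ℝ (Fin d)))
    (δ : Fin k → ℝ) : ℕ :=
  Set.ncard {p : Fin (k + 1) → EuclideanSpace ℝ (Fin d) |
    (∀ i, p i ∈ P) ∧ Function.Injective p ∧
    ∀ j : Fin k, dist (p j.castSucc) (p j.succ) = δ j}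

/-- `maxChains d k n` is the maximum number of `k`-chains spanned by a set of `n` points in
`ℝ^d`, over all sequences of positive distances. -/
noncomputable def maxChains (d k n : ℕ) : ℕ :=
  sSup {m | ∃ (P : Finset (EuclideanSpace ℝ (Fin d))) (δ : Fin k → ℝ),
    P.card = n ∧ (∀ j, 0 < δ j) ∧ m = chainCount d k P δ}

open Metric Finset

theorem card_mul_card_le_chainCount_two {d : ℕ} {P A B : Finset (EuclideanSpace ℝ (Fin d))}
    {o : EuclideanSpace ℝ (Fin d)} {δ₁ δ₂ : ℝ} (hδ₁ : 0 < δ₁) (hδ₂ : 0 < δ₂)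
    (hoP : o ∈ P) (hAP : A ⊆ P) (hBP : B ⊆ P)
    (hA : (A : Set _) ⊆ sphere o δ₁) (hB : (B : Set _) ⊆ sphere o δ₂) (hAB : Disjoint A B) :
    #A * #B ≤ chainCount d 2 P ![δ₁, δ₂] := by
  have hfin : {p : Fin 3 → EuclideanSpace ℝ (Fin d) | (∀ i, p i ∈ P) ∧ Function.Injective p ∧
      ∀ j : Fin 2, dist (p j.castSucc) (p j.succ) = ![δ₁, δ₂] j}.Finite :=
    (Set.Finite.pi fun _ => P.finite_toSet).subset fun p hp => by simpa using hp.1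
  rw [← card_product, ← Set.ncard_coe_finset]
  refine Set.ncard_le_ncard_of_injOn (fun ab => ![ab.1, o, ab.2]) ?_ ?_ hfin
  · rintro ⟨a, b⟩ hab
    rw [coe_product, Set.mem_prod] at hab
    have ha : dist a o = δ₁ := hA hab.1
    have hb : dist b o = δ₂ := hB hab.2
    have hao : a ≠ o := fun h => hδ₁.ne' (by simpa [h] using ha.symm)
    have hbo : b ≠ o := fun h => hδ₂.ne' (by simpa [h] using hb.symm)
    have hab' : a ≠ b := fun h => Finset.disjoint_left.1 hAB hab.1 (h ▸ hab.2)
    refine ⟨fun i => ?_, fun i j hij => ?_, fun j => ?_⟩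
    · fin_cases i
      exacts [hAP hab.1, hoP, hBP hab.2]
    · fin_cases i <;> fin_cases j <;> simp_all [eq_comm]
    · fin_cases j
      exacts [ha, by simpa [dist_comm] using hb]
  · rintro ⟨a, b⟩ - ⟨a', b'⟩ - h
    exact Prod.ext (congrFun h 0) (congrFun h 2)

theorem Metric.sphere_infinite {E : Type*} [NormedAddCommGroup E] [NormedSpace ℝ E]
    (hE : 1 < Module.rank ℝ E) (x : E) {r : ℝ} (hr : 0 < r) : (sphere x r).Infinite := by
  obtain ⟨y, hy⟩ := (isConnected_sphere hE x hr.le).nonempty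
  have hy' : x - (y - x) ∈ sphere x r := by
    rwa [mem_sphere, dist_eq_norm, sub_sub_cancel_left, norm_neg, ← dist_eq_norm]
  refine (isPreconnected_sphere hE x r).infinite_of_nontrivial ⟨y, hy, _, hy', fun h => ?_⟩
  have h2 : (2 : ℝ) • (y - x) = 0 := by
    rw [two_smul]; nth_rewrite 1 [h]; abel
  have hyx : y - x = 0 := (smul_eq_zero.1 h2).resolve_left two_ne_zero
  rw [mem_sphere, dist_eq_norm, hyx, norm_zero] at hy
  exact hr.ne hy

theorem Set.Infinite.exists_disjoint_finsets {α : Type*} {s t : Set α} (hs : s.Infinite)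
    (ht : t.Infinite) (m k : ℕ) :
    ∃ A B : Finset α, ↑A ⊆ s ∧ ↑B ⊆ t ∧ Disjoint A B ∧ #A = m ∧ #B = k := by
  obtain ⟨B, hBt, hB⟩ := ht.exists_subset_card_eq k
  obtain ⟨A, hAs, hA⟩ := (hs.sdiff B.finite_toSet).exists_subset_card_eq m
  refine ⟨A, B, hAs.trans Set.sdiff_subset, hBt, ?_, hA, hB⟩
  exact Finset.disjoint_left.2 fun a ha hb => (hAs ha).2 hb

theorem sq_le_thirtysix_mul_halves {n : ℕ} (hn : 3 ≤ n) :
    n ^ 2 ≤ 36 * ((n - 1) / 2 * (n - 1 - (n - 1) / 2)) := by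
  have h := Nat.mul_le_mul (show n ≤ 6 * ((n - 1) / 2) by omega)
    (show n ≤ 6 * (n - 1 - (n - 1) / 2) by omega)
  linarith

theorem hinges_lower_bound :
    ∃ c : ℝ, 0 < c ∧ ∀ (δ₁ δ₂ : ℝ), 0 < δ₁ → 0 < δ₂ → ∀ n : ℕ, 3 ≤ n →
      ∃ P : Finset (EuclideanSpace ℝ (Fin 2)), P.card = n ∧
        c * (n : ℝ) ^ 2 ≤ (chainCount 2 2 P ![δ₁, δ₂] : ℝ) := by
  refine ⟨1 / 36, by norm_num, fun δ₁ δ₂ h₁ h₂ n hn => ?_⟩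
  have hrank : 1 < Module.rank ℝ (EuclideanSpace ℝ (Fin 2)) := by
    rw [← Module.finrank_eq_rank, finrank_euclideanSpace_fin]; norm_num
  obtain ⟨A, B, hA, hB, hAB, hAcard, hBcard⟩ :=
    (sphere_infinite hrank 0 h₁).exists_disjoint_finsets (sphere_infinite hrank 0 h₂)
      ((n - 1) / 2) (n - 1 - (n - 1) / 2)
  have h0 : (0 : EuclideanSpace ℝ (Fin 2)) ∉ A ∪ B := by
    rw [mem_union]
    rintro (h | h)
    · exact h₁.ne (by simpa using hA h)
    · exact h₂.ne (by simpa using hB h)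
  refine ⟨insert 0 (A ∪ B), ?_, ?_⟩
  · rw [card_insert_of_notMem h0, card_union_of_disjoint hAB]
    omega
  have hchains := card_mul_card_le_chainCount_two h₁ h₂ (mem_insert_self 0 (A ∪ B))
    (subset_union_left.trans (subset_insert _ _)) (subset_union_right.trans (subset_insert _ _))
    hA hB hAB
  rw [hAcard, hBcard] at hchains
  calc 1 / 36 * (n : ℝ) ^ 2 ≤ ((n - 1) / 2 * (n - 1 - (n - 1) / 2) : ℕ) := by
        rw [div_mul_eq_mul_div, div_le_iff₀ (by norm_num), one_mul, mul_comm]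
        exact_mod_cast sq_le_thirtysix_mul_halves hn
    _ ≤ chainCount 2 2 (insert 0 (A ∪ B)) ![δ₁, δ₂] := by exact_mod_cast hchains
end

section
/- For every integer k ≥ 1 with k ≡ 1 (mod 3), there exists a constant c > 0 (depending only on k) such that for every sufficiently large n there exist a set P of n points in ℝ² and positive distances δ₁, …, δ_k for which P spans at least c · n^{(k+2)/3} k-chains. That is, C_k(n) = Ω(n^{(k+2)/3}). -/
/-!
Write `k = 3t + 1`. Put centres at `3, 6, …, 3t` on the real axis of `ℂ` and `s` points `u_j` on
the open upper unit semicircle. A chain alternates a translation by `3` with a unit step into a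
centre and a unit step out of it, so every choice of `t + 1` semicircle points gives a chain, and
all these chains live on `O(ts)` points. Taking `s ≈ n / k` yields `s ^ (t + 1) = Ω(n ^ (t + 1))`
chains. The offsets flip sign from one centre to the next, so the two chain points next to a
centre lie on opposite sides of the real axis and never coincide.
-/

open Function

theorem card_le_chainCount {α : Type*} [Fintype α] {d k : ℕ}
    {P : Finset (EuclideanSpace ℝ (Fin d))} {δ : Fin k → ℝ}
    (f : α → Fin (k + 1) → EuclideanSpace ℝ (Fin d)) (hf : Injective f)
    (hP : ∀ a i, f a i ∈ P) (hinj : ∀ a, Injective (f a))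
    (hδ : ∀ a j, dist (f a j.castSucc) (f a j.succ) = δ j) :
    Fintype.card α ≤ chainCount d k P δ := by
  have hfin : {p : Fin (k + 1) → EuclideanSpace ℝ (Fin d) |
      (∀ i, p i ∈ P) ∧ Injective p ∧ ∀ j : Fin k, dist (p j.castSucc) (p j.succ) = δ j}.Finite :=
    (Set.Finite.pi' fun _ => P.finite_toSet).subset fun p hp => hp.1
  calc Fintype.card α = (Set.range f).ncard := by
        rw [← Nat.card_coe_set_eq, Nat.card_range_of_injective hf, Nat.card_eq_fintype_card]
    _ ≤ chainCount d k P δ :=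
        Set.ncard_le_ncard (Set.range_subset_iff.2 fun a => ⟨hP a, hinj a, hδ a⟩) hfin

noncomputable def arcPt (n : ℕ) : ℂ := ⟨n / (n + 1), √(1 - (n / (n + 1)) ^ 2)⟩

lemma sq_natCast_div_add_one_lt_one (n : ℕ) : ((n : ℝ) / (n + 1)) ^ 2 < 1 := by
  have h : (n : ℝ) / (n + 1) < 1 := by rw [div_lt_one (by positivity)]; linarith
  have h0 : 0 ≤ (n : ℝ) / (n + 1) := by positivity
  nlinarith

lemma norm_arcPt (n : ℕ) : ‖arcPt n‖ = 1 := by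
  rw [Complex.norm_def, Complex.normSq_apply, Real.sqrt_eq_one]
  simp only [arcPt]
  rw [← sq, ← sq, Real.sq_sqrt (by linarith [sq_natCast_div_add_one_lt_one n])]
  ring

lemma im_arcPt_pos (n : ℕ) : 0 < (arcPt n).im :=
  Real.sqrt_pos.2 (by linarith [sq_natCast_div_add_one_lt_one n])

lemma arcPt_injective : Injective arcPt := by
  intro m n h
  have h := congrArg Complex.re h
  simp only [arcPt] at h
  field_simp at h
  exact_mod_cast (by linarith : (m : ℝ) = n)

section Zigzag

variable (u : ℕ → ℂ)

def zigzagSide (l : ℕ) : ℂ :=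
  if l % 3 = 0 then u (l / 3) else if l % 3 = 1 then -u (l / 3) else 0

/-- Position `l` lies within `1` of the anchor `3 * ⌈l / 3⌉`, and the sign of
`(zigzagSide u l).im` (positive, negative, zero) records `l % 3`: together they recover `l`. -/
def zigzag (l : ℕ) : ℂ :=
  3 * ((l + 2) / 3 : ℕ) + (-1) ^ ((l + 2) / 3) * zigzagSide u l

lemma zigzag_three_mul (i : ℕ) : zigzag u (3 * i) = 3 * i + (-1) ^ i * u i := by
  have h1 : (3 * i + 2) / 3 = i := by omega
  have h2 : 3 * i / 3 = i := by omega
  simp [zigzag, zigzagSide, h1, h2]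

lemma zigzag_three_mul_add_one (i : ℕ) :
    zigzag u (3 * i + 1) = 3 * (i + 1) + (-1) ^ i * u i := by
  have h1 : (3 * i + 1 + 2) / 3 = i + 1 := by omega
  have h2 : (3 * i + 1) / 3 = i := by omega
  have h3 : (3 * i + 1) % 3 = 1 := by omega
  simp only [zigzag, zigzagSide, h1, h2, h3]
  push_cast
  ring

lemma zigzag_three_mul_add_two (i : ℕ) : zigzag u (3 * i + 2) = 3 * (i + 1) := by
  have h1 : (3 * i + 2 + 2) / 3 = i + 1 := by omega
  have h3 : (3 * i + 2) % 3 = 2 := by omega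
  simp only [zigzag, zigzagSide, h1, h3]
  push_cast
  ring

variable {u}

lemma dist_zigzag_succ (hu : ∀ i, ‖u i‖ = 1) (l : ℕ) :
    dist (zigzag u l) (zigzag u (l + 1)) = if l % 3 = 0 then 3 else 1 := by
  obtain ⟨i, r, hr, rfl⟩ : ∃ i r, r < 3 ∧ l = 3 * i + r := ⟨l / 3, l % 3, by omega, by omega⟩
  interval_cases r
  · rw [add_zero, zigzag_three_mul, zigzag_three_mul_add_one, Complex.dist_eq,
      show (3 * i + (-1) ^ i * u i - (3 * (i + 1) + (-1) ^ i * u i) : ℂ) = -3 by ring]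
    norm_num
  · rw [show 3 * i + 1 + 1 = 3 * i + 2 by ring]
    simp [zigzag_three_mul_add_one, zigzag_three_mul_add_two, hu]
  · rw [show 3 * i + 2 + 1 = 3 * (i + 1) by ring]
    simp [zigzag_three_mul, zigzag_three_mul_add_two, hu]

lemma abs_re_zigzag_sub_le (hu : ∀ i, ‖u i‖ = 1) (l : ℕ) :
    |(zigzag u l).re - 3 * ((l + 2) / 3 : ℕ)| ≤ 1 := by
  have hside : ‖zigzagSide u l‖ ≤ 1 := by
    unfold zigzagSide; split_ifs <;> simp [hu]
  calc |(zigzag u l).re - 3 * ((l + 2) / 3 : ℕ)|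
      = |((-1) ^ ((l + 2) / 3) * zigzagSide u l).re| := by simp [zigzag]
    _ ≤ ‖(-1) ^ ((l + 2) / 3) * zigzagSide u l‖ := Complex.abs_re_le_norm _
    _ ≤ 1 := by simpa using hside

lemma floor_re_zigzag (hu : ∀ i, ‖u i‖ = 1) (l : ℕ) :
    ⌊((zigzag u l).re + 1) / 3⌋₊ = (l + 2) / 3 := by
  have h := abs_le.1 (abs_re_zigzag_sub_le hu l)
  have ha : (0 : ℝ) ≤ ((l + 2) / 3 : ℕ) := Nat.cast_nonneg _
  rw [Nat.floor_eq_iff (by linarith)]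
  constructor <;> linarith

lemma zigzag_injective (hu : ∀ i, ‖u i‖ = 1) (him : ∀ i, 0 < (u i).im) :
    Injective (zigzag u) := by
  intro l l' h
  have ha : (l + 2) / 3 = (l' + 2) / 3 := by
    rw [← floor_re_zigzag hu l, ← floor_re_zigzag hu l', h]
  have hside : zigzagSide u l = zigzagSide u l' := by
    simpa [zigzag, ha] using h
  have hr : l % 3 = l' % 3 := by
    have h1 := congrArg Complex.im hside
    unfold zigzagSide at h1
    split_ifs at h1 <;> first | omega | (simp at h1; linarith [him (l / 3), him (l' / 3)])
  omega

end Zigzag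

lemma cast_div_two_mul_le_cast_div {n b : ℕ} (hbn : b ≤ n) : (n : ℝ) / (2 * b) ≤ (n / b : ℕ) := by
  rcases Nat.eq_zero_or_pos b with rfl | hb
  · simp
  have hlt := Nat.lt_div_mul_add (a := n) hb
  have hpos := Nat.div_pos hbn hb
  have hle : n ≤ 2 * b * (n / b) := by nlinarith
  rw [div_le_iff₀ (by positivity)]
  exact_mod_cast (by linarith [hle] : n ≤ (n / b) * (2 * b))

noncomputable abbrev toPlane : ℂ ≃ₗᵢ[ℝ] EuclideanSpace ℝ (Fin 2) :=
  Complex.orthonormalBasisOneI.repr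

/-- `Fin.clamp` only extends `J` to `ℕ`; indices beyond `t` are never visited. -/
noncomputable def zigzagChain (t s : ℕ) (J : Fin (t + 1) → Fin s) (l : Fin (3 * t + 1 + 1)) :
    EuclideanSpace ℝ (Fin 2) :=
  toPlane (zigzag (fun i => arcPt (J (Fin.clamp i t))) l)

noncomputable def zigzagPoints (t s : ℕ) : Finset (EuclideanSpace ℝ (Fin 2)) :=
  (Finset.range (3 * t + 2) ×ˢ Finset.range s).image
    fun p => toPlane (zigzag (fun _ => arcPt p.2) p.1)

lemma card_zigzagPoints_le (t s : ℕ) : (zigzagPoints t s).card ≤ (3 * t + 2) * s :=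
  Finset.card_image_le.trans_eq (by simp)

def zigzagDist (k : ℕ) (j : Fin k) : ℝ := if (j : ℕ) % 3 = 0 then 3 else 1

lemma zigzagDist_pos (k : ℕ) (j : Fin k) : 0 < zigzagDist k j := by
  unfold zigzagDist; split_ifs <;> norm_num

lemma zigzagChain_injective (t s : ℕ) : Injective (zigzagChain t s) := by
  intro J J' h
  funext i
  have hi := congrFun h ⟨3 * i, by omega⟩
  simp only [zigzagChain, LinearIsometryEquiv.map_eq_iff, zigzag_three_mul, add_right_inj,
    mul_right_inj' (pow_ne_zero _ (by norm_num : (-1 : ℂ) ≠ 0))] at hi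
  have hclamp : Fin.clamp i t = i := Fin.ext (min_eq_left (Nat.lt_succ_iff.1 i.isLt))
  rw [hclamp] at hi
  exact Fin.ext (by exact_mod_cast arcPt_injective hi)

theorem pow_le_chainCount_zigzag (t s : ℕ) {P : Finset (EuclideanSpace ℝ (Fin 2))}
    (hP : zigzagPoints t s ⊆ P) :
    s ^ (t + 1) ≤ chainCount 2 (3 * t + 1) P (zigzagDist (3 * t + 1)) := by
  have hu : ∀ J : Fin (t + 1) → Fin s, ∀ i, ‖arcPt (J (Fin.clamp i t))‖ = 1 :=
    fun _ _ => norm_arcPt _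
  simpa using card_le_chainCount (zigzagChain t s) (zigzagChain_injective t s)
    (fun J l => hP (Finset.mem_image.2 ⟨(l, J (Fin.clamp (l / 3) t)), by simp, rfl⟩))
    (fun J => toPlane.injective.comp
      ((zigzag_injective (hu J) fun _ => im_arcPt_pos _).comp Fin.val_injective))
    (fun J j => by simp [zigzagChain, dist_zigzag_succ (hu J), zigzagDist])

theorem chains_lower_R2_mod3_eq_1_general (k : ℕ) (hmod : k % 3 = 1) :
    ∃ c : ℝ, 0 < c ∧ ∃ N : ℕ, ∀ n : ℕ, N ≤ n →
      ∃ (P : Finset (EuclideanSpace ℝ (Fin 2))) (δ : Fin k → ℝ),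
        P.card = n ∧ (∀ j, 0 < δ j) ∧
        c * (n : ℝ) ^ ((k + 2) / 3) ≤ (chainCount 2 k P δ : ℝ) := by
  obtain ⟨t, rfl⟩ : ∃ t, k = 3 * t + 1 := ⟨k / 3, by omega⟩
  refine ⟨(1 / (2 * (3 * t + 2))) ^ (t + 1), by positivity, 3 * t + 2, fun n hn => ?_⟩
  obtain ⟨P, hsub, hcard⟩ := Infinite.exists_superset_card_eq (zigzagPoints t (n / (3 * t + 2))) n
    ((card_zigzagPoints_le _ _).trans (Nat.mul_div_le n _))
  refine ⟨P, zigzagDist _, hcard, zigzagDist_pos _, ?_⟩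
  rw [show (3 * t + 1 + 2) / 3 = t + 1 by omega, ← mul_pow, one_div_mul_eq_div]
  calc ((n : ℝ) / (2 * (3 * t + 2))) ^ (t + 1) ≤ ((n / (3 * t + 2) : ℕ) : ℝ) ^ (t + 1) := by
        gcongr
        exact_mod_cast cast_div_two_mul_le_cast_div hn
    _ ≤ _ := by exact_mod_cast pow_le_chainCount_zigzag t _ hsub

theorem chains_lower_R2_mod3_eq_1 (k : ℕ) (hk : 1 ≤ k) (hmod : k % 3 = 1) :
    ∃ c : ℝ, 0 < c ∧ ∃ N : ℕ, ∀ n : ℕ, N ≤ n →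
      ∃ (P : Finset (EuclideanSpace ℝ (Fin 2))) (δ : Fin k → ℝ),
        P.card = n ∧ (∀ j, 0 < δ j) ∧
        c * (n : ℝ) ^ ((k + 2) / 3) ≤ (chainCount 2 k P δ : ℝ) :=
  chains_lower_R2_mod3_eq_1_general k hmod
end

section
/- For every integer k ≥ 3 with k ≡ 0 (mod 3), there exists a constant c (depending only on k) such that for every n, C_k(n) ≤ c · n · u(n)^{k/3}. -/
/-- `maxUnitDist d n` is the maximum, over all `n`-point sets `P ⊆ ℝ^d` and all `δ > 0`, of
the number of ordered pairs of points of `P` at distance `δ`. -/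
noncomputable def maxUnitDist (d n : ℕ) : ℕ :=
  sSup {m | ∃ (P : Finset (EuclideanSpace ℝ (Fin d))) (δ : ℝ),
    P.card = n ∧ 0 < δ ∧
    m = Set.ncard {pq : EuclideanSpace ℝ (Fin d) × EuclideanSpace ℝ (Fin d) |
      pq.1 ∈ P ∧ pq.2 ∈ P ∧ dist pq.1 pq.2 = δ}}

local notation "E2" => EuclideanSpace ℝ (Fin 2)

/-- Two circles with distinct centers in the plane meet in at most two points. -/
lemma card_two_circles (a b : E2) (hab : a ≠ b) (r s : ℝ) (T : Finset E2)
    (hT : ∀ x ∈ T, dist a x = r ∧ dist x b = s) : T.card ≤ 2 := by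
  classical
  by_cases h2 : T.card ≤ 2
  · exact h2
  obtain ⟨x, hx, y, hy, hxy⟩ := Finset.one_lt_card.mp (show 1 < T.card by omega)
  have hsub : T ⊆ {x, y} := by
    intro z hz
    have hd : Module.finrank ℝ E2 = 2 := finrank_euclideanSpace_fin
    have hx1 : dist x a = r := by rw [dist_comm]; exact (hT x hx).1
    have hy1 : dist y a = r := by rw [dist_comm]; exact (hT y hy).1
    have hz1 : dist z a = r := by rw [dist_comm]; exact (hT z hz).1
    have h := EuclideanGeometry.eq_of_dist_eq_of_dist_eq_of_finrank_eq_two (V := E2) (P := E2)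
      hd hab hxy hx1 hy1 hz1 (hT x hx).2 (hT y hy).2 (hT z hz).2
    rcases h with h | h <;> simp [h]
  calc T.card ≤ ({x, y} : Finset E2).card := Finset.card_le_card hsub
    _ ≤ 2 := (Finset.card_insert_le _ _).trans (by norm_num)

lemma bddAbove_unitDistSet (n : ℕ) :
    BddAbove {m | ∃ (P : Finset E2) (δ : ℝ),
      P.card = n ∧ 0 < δ ∧
      m = Set.ncard {pq : E2 × E2 | pq.1 ∈ P ∧ pq.2 ∈ P ∧ dist pq.1 pq.2 = δ}} := by
  refine ⟨n * n, ?_⟩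
  rintro x ⟨P, δ, hP, hδ, rfl⟩
  have hsub : {pq : E2 × E2 | pq.1 ∈ P ∧ pq.2 ∈ P ∧ dist pq.1 pq.2 = δ} ⊆ ↑(P ×ˢ P) := by
    rintro ⟨u, v⟩ ⟨h1, h2, _⟩
    simp [Finset.mem_product, h1, h2]
  calc Set.ncard _ ≤ (↑(P ×ˢ P) : Set (E2 × E2)).ncard :=
        Set.ncard_le_ncard hsub (P ×ˢ P).finite_toSet
    _ = (P ×ˢ P).card := Set.ncard_coe_finset _
    _ = n * n := by rw [Finset.card_product, hP]

/-- The number of ordered pairs of `P` at a positive distance `δ` is at most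
`maxUnitDist 2 P.card`. -/
lemma pair_count_le (P : Finset E2) (δ : ℝ) (hδ : 0 < δ)
    [DecidablePred fun q : E2 × E2 => dist q.1 q.2 = δ] :
    ((P ×ˢ P).filter (fun q => dist q.1 q.2 = δ)).card ≤ maxUnitDist 2 P.card := by
  apply le_csSup (bddAbove_unitDistSet P.card)
  refine ⟨P, δ, rfl, hδ, ?_⟩
  rw [← Set.ncard_coe_finset]
  congr 1
  ext ⟨u, v⟩
  simp [Finset.mem_filter, Finset.mem_product, and_assoc]

/-- Index `3*i + r` of a chain point. -/
def idx (m : ℕ) (i : Fin m) (r : ℕ) (hr : r ≤ 3) : Fin (3 * m + 1) :=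
  ⟨3 * i + r, by have := i.isLt; omega⟩

/-- Index `3*i + r` of a chain edge. -/
def eidx (m : ℕ) (i : Fin m) (r : ℕ) (hr : r < 3) : Fin (3 * m) :=
  ⟨3 * i + r, by have := i.isLt; omega⟩

lemma main_bound (m : ℕ) (P : Finset E2) (δ : Fin (3 * m) → ℝ) (hδ : ∀ j, 0 < δ j) :
    chainCount 2 (3 * m) P δ ≤ 2 ^ m * (P.card * (maxUnitDist 2 P.card) ^ m) := by
  classical
  set S : Finset (Fin (3 * m + 1) → E2) := (Fintype.piFinset (fun _ => P)).filter
    (fun p => Function.Injective p ∧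
      ∀ j : Fin (3 * m), dist (p j.castSucc) (p j.succ) = δ j) with hSdef
  have hmemS : ∀ p, p ∈ S ↔ (∀ i, p i ∈ P) ∧ Function.Injective p ∧
      ∀ j : Fin (3 * m), dist (p j.castSucc) (p j.succ) = δ j := by
    intro p
    simp [hSdef, Fintype.mem_piFinset]
  have hcc : chainCount 2 (3 * m) P δ = S.card := by
    rw [chainCount, ← Set.ncard_coe_finset]
    congr 1
    ext p
    simp [hmemS p]
  -- the edge relations, phrased via `idx` and `eidx`
  have hedge : ∀ p ∈ S, ∀ (i : Fin m) (r : ℕ) (hr : r < 3),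
      dist (p (idx m i r (le_of_lt hr))) (p (idx m i (r + 1) hr)) = δ (eidx m i r hr) := by
    intro p hp i r hr
    have h := ((hmemS p).mp hp).2.2 (eidx m i r hr)
    have h1 : (eidx m i r hr).castSucc = idx m i r (le_of_lt hr) := by
      apply Fin.ext; simp [eidx, idx]
    have h2 : (eidx m i r hr).succ = idx m i (r + 1) hr := by
      apply Fin.ext; simp [eidx, idx]; omega
    rwa [h1, h2] at h
  -- the recording map
  set f : (Fin (3 * m + 1) → E2) → E2 × (Fin m → E2 × E2) :=
    fun p => (p 0, fun i => (p (idx m i 2 (by omega)), p (idx m i 3 le_rfl))) with hfdef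
  have key : S.card ≤ 2 ^ m * (S.image f).card := by
    apply Finset.card_le_mul_card_image
    intro b hb
    obtain ⟨p₀, hp₀S, hfp₀⟩ := Finset.mem_image.mp hb
    set F : Finset (Fin (3 * m + 1) → E2) := S.filter (fun p => f p = b) with hFdef
    have hp₀F : p₀ ∈ F := Finset.mem_filter.mpr ⟨hp₀S, hfp₀⟩
    -- recorded coordinates agree with those of p₀
    have hcomp : ∀ p ∈ F, p 0 = p₀ 0 ∧ ∀ i : Fin m,
        p (idx m i 2 (by omega)) = p₀ (idx m i 2 (by omega)) ∧
        p (idx m i 3 le_rfl) = p₀ (idx m i 3 le_rfl) := by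
      intro p hpF
      have h1 : f p = f p₀ := by
        rw [(Finset.mem_filter.mp hpF).2, hfp₀]
      constructor
      · exact congrArg Prod.fst h1
      · intro i
        have h2 := congrFun (congrArg Prod.snd h1) i
        exact ⟨congrArg Prod.fst h2, congrArg Prod.snd h2⟩
    have h0eq : ∀ p ∈ F, ∀ i : Fin m,
        p (idx m i 0 (by omega)) = p₀ (idx m i 0 (by omega)) := by
      intro p hpF i
      rcases Nat.eq_zero_or_pos i.val with h | h
      · have he : idx m i 0 (by omega) = (0 : Fin (3 * m + 1)) := by
          apply Fin.ext; simp [idx, h]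
        rw [he]; exact (hcomp p hpF).1
      · have hlt : i.val - 1 < m := by have := i.isLt; omega
        have he : idx m i 0 (by omega) = idx m ⟨i.val - 1, hlt⟩ 3 le_rfl := by
          apply Fin.ext; simp only [idx]; omega
        rw [he]; exact ((hcomp p hpF).2 ⟨i.val - 1, hlt⟩).2
    -- the fiber injects, via the middle points, into a product of pair intersections
    set g : (Fin (3 * m + 1) → E2) → (Fin m → E2) :=
      fun p i => p (idx m i 1 (by omega)) with hgdef
    have hginj : Set.InjOn g ↑F := by
      intro p hpF q hqF hgpq
      funext j
      rcases (show (j : ℕ) = 0 ∨ ∃ i : ℕ, i < m ∧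
          ((j : ℕ) = 3 * i + 1 ∨ (j : ℕ) = 3 * i + 2 ∨ (j : ℕ) = 3 * i + 3) by
        have := j.isLt
        rcases Nat.eq_zero_or_pos (j : ℕ) with h | h
        · exact Or.inl h
        · exact Or.inr ⟨((j : ℕ) - 1) / 3, by omega, by omega⟩) with h0 | ⟨i, hi, hcase⟩
      · have he : j = (0 : Fin (3 * m + 1)) := Fin.ext (by simpa using h0)
        rw [he, (hcomp p hpF).1, (hcomp q hqF).1]
      · rcases hcase with h1 | h2 | h3
        · have he : j = idx m ⟨i, hi⟩ 1 (by omega) := Fin.ext (by simpa [idx] using h1)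
          rw [he]
          exact congrFun hgpq ⟨i, hi⟩
        · have he : j = idx m ⟨i, hi⟩ 2 (by omega) := Fin.ext (by simpa [idx] using h2)
          rw [he, ((hcomp p hpF).2 ⟨i, hi⟩).1, ((hcomp q hqF).2 ⟨i, hi⟩).1]
        · have he : j = idx m ⟨i, hi⟩ 3 le_rfl := Fin.ext (by simpa [idx] using h3)
          rw [he, ((hcomp p hpF).2 ⟨i, hi⟩).2, ((hcomp q hqF).2 ⟨i, hi⟩).2]
    set C : Fin m → Finset E2 := fun i => P.filter (fun x =>
      dist (p₀ (idx m i 0 (by omega))) x = δ (eidx m i 0 (by omega)) ∧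
      dist x (p₀ (idx m i 2 (by omega))) = δ (eidx m i 1 (by omega))) with hCdef
    have hCcard : ∀ i : Fin m, (C i).card ≤ 2 := by
      intro i
      apply card_two_circles (p₀ (idx m i 0 (by omega))) (p₀ (idx m i 2 (by omega)))
        ?_ (δ (eidx m i 0 (by omega))) (δ (eidx m i 1 (by omega))) (C i) ?_
      · have hinj : Function.Injective p₀ := ((hmemS p₀).mp hp₀S).2.1
        exact fun h => by
          have := hinj h
          have := congrArg Fin.val this
          simp [idx] at this
      · intro x hx
        exact (Finset.mem_filter.mp hx).2
    have hgsub : F.image g ⊆ Fintype.piFinset C := by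
      intro q hq
      obtain ⟨p, hpF, rfl⟩ := Finset.mem_image.mp hq
      have hpS : p ∈ S := (Finset.mem_filter.mp hpF).1
      rw [Fintype.mem_piFinset]
      intro i
      rw [hCdef]
      refine Finset.mem_filter.mpr ⟨((hmemS p).mp hpS).1 _, ?_, ?_⟩
      · rw [← h0eq p hpF i]
        exact hedge p hpS i 0 (by omega)
      · rw [← ((hcomp p hpF).2 i).1]
        exact hedge p hpS i 1 (by omega)
    have hFcard : F.card ≤ 2 ^ m := by
      calc F.card = (F.image g).card := (Finset.card_image_of_injOn hginj).symm
        _ ≤ (Fintype.piFinset C).card := Finset.card_le_card hgsub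
        _ = ∏ i : Fin m, (C i).card := Fintype.card_piFinset C
        _ ≤ ∏ _i : Fin m, 2 := Finset.prod_le_prod' (fun i _ => hCcard i)
        _ = 2 ^ m := by simp
    simpa [hFdef] using hFcard
  -- the image is contained in P × (pairs at prescribed distances)
  have himg : (S.image f).card ≤ P.card * (maxUnitDist 2 P.card) ^ m := by
    set D : Fin m → Finset (E2 × E2) := fun i =>
      (P ×ˢ P).filter (fun q => dist q.1 q.2 = δ (eidx m i 2 (by omega))) with hDdef
    have hsub : S.image f ⊆ P ×ˢ Fintype.piFinset D := by
      intro b hb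
      obtain ⟨p, hpS, rfl⟩ := Finset.mem_image.mp hb
      have hmem := ((hmemS p).mp hpS).1
      rw [Finset.mem_product]
      constructor
      · exact hmem 0
      · rw [Fintype.mem_piFinset]
        intro i
        rw [hDdef]
        refine Finset.mem_filter.mpr ⟨Finset.mem_product.mpr ⟨hmem _, hmem _⟩, ?_⟩
        exact hedge p hpS i 2 (by omega)
    calc (S.image f).card ≤ (P ×ˢ Fintype.piFinset D).card := Finset.card_le_card hsub
      _ = P.card * (Fintype.piFinset D).card := Finset.card_product _ _
      _ = P.card * ∏ i : Fin m, (D i).card := by rw [Fintype.card_piFinset]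
      _ ≤ P.card * ∏ _i : Fin m, maxUnitDist 2 P.card := by
          apply Nat.mul_le_mul_left
          exact Finset.prod_le_prod' (fun i _ => pair_count_le P _ (hδ _))
      _ = P.card * (maxUnitDist 2 P.card) ^ m := by simp
  calc chainCount 2 (3 * m) P δ = S.card := hcc
    _ ≤ 2 ^ m * (S.image f).card := key
    _ ≤ 2 ^ m * (P.card * (maxUnitDist 2 P.card) ^ m) := Nat.mul_le_mul_left _ himg

lemma maxChains_le (m n : ℕ) :
    maxChains 2 (3 * m) n ≤ 2 ^ m * (n * (maxUnitDist 2 n) ^ m) := by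
  apply csSup_le'
  rintro x ⟨P, δ, hP, hδ, rfl⟩
  subst hP
  exact main_bound m P δ hδ

theorem chains_vs_unit_distances_mod3_eq_0 (k : ℕ) (hk : 3 ≤ k) (hmod : k % 3 = 0) :
    ∃ c : ℝ, 0 < c ∧ ∀ n : ℕ,
      (maxChains 2 k n : ℝ) ≤ c * (n : ℝ) * (maxUnitDist 2 n : ℝ) ^ (k / 3) := by
  obtain ⟨m, rfl⟩ : ∃ m, k = 3 * m := ⟨k / 3, by omega⟩
  refine ⟨2 ^ m, by positivity, fun n => ?_⟩
  have h3 : 3 * m / 3 = m := by omega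
  rw [h3]
  have h := maxChains_le m n
  calc (maxChains 2 (3 * m) n : ℝ) ≤ ((2 ^ m * (n * (maxUnitDist 2 n) ^ m) : ℕ) : ℝ) := by
        exact_mod_cast h
    _ = 2 ^ m * (n : ℝ) * (maxUnitDist 2 n : ℝ) ^ m := by push_cast; ring
end

section
/- For every integer k ≥ 4 with k ≡ 1 (mod 3), there exists a constant c (depending only on k) such that for every n, C_k(n) ≤ c · u(n)^{(k+2)/3}. -/
open Classical in
lemma ncard_le_mul_of_fibers {α β : Type*} {s : Set α} (hs : s.Finite) (f : α → β)
    (t : Finset β) (hf : ∀ a ∈ s, f a ∈ t) {m : ℕ}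
    (hm : ∀ b, ({a ∈ s | f a = b}).ncard ≤ m) : s.ncard ≤ m * t.card := by
  rw [Set.ncard_eq_toFinset_card _ hs]
  refine Finset.card_le_mul_card_image_of_maps_to (fun a ha => hf a (hs.mem_toFinset.mp ha)) m
    (fun b _ => ?_)
  have h2 : (({a ∈ hs.toFinset | f a = b} : Finset α) : Set α) = {a ∈ s | f a = b} := by
    ext a; simp
  rw [← Set.ncard_coe_finset, h2]
  exact hm b

noncomputable section

abbrev Epl := EuclideanSpace ℝ (Fin 2)

def PairSet (P : Finset Epl) (r : ℝ) : Set (Epl × Epl) :=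
  {pq : Epl × Epl | pq.1 ∈ P ∧ pq.2 ∈ P ∧ dist pq.1 pq.2 = r}

def ChainSet (k : ℕ) (P : Finset Epl) (δ : Fin k → ℝ) : Set (Fin (k + 1) → Epl) :=
  {p : Fin (k + 1) → Epl |
    (∀ i, p i ∈ P) ∧ Function.Injective p ∧
    ∀ j : Fin k, dist (p j.castSucc) (p j.succ) = δ j}

lemma pairSet_finite (P : Finset Epl) (r : ℝ) : (PairSet P r).Finite := by
  apply Set.Finite.subset (P ×ˢ P).finite_toSet
  rintro ⟨x, y⟩ ⟨hx, hy, -⟩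
  simp [Finset.mem_product, hx, hy]

lemma pairSet_ncard_le (P : Finset Epl) (r : ℝ) : (PairSet P r).ncard ≤ P.card * P.card := by
  calc (PairSet P r).ncard ≤ ((P ×ˢ P : Finset _) : Set _).ncard :=
        Set.ncard_le_ncard (by rintro ⟨x, y⟩ ⟨hx, hy, -⟩; simp [Finset.mem_product, hx, hy])
          (P ×ˢ P).finite_toSet
    _ = (P ×ˢ P).card := Set.ncard_coe_finset _
    _ = P.card * P.card := Finset.card_product _ _

lemma chainSet_finite (k : ℕ) (P : Finset Epl) (δ : Fin k → ℝ) : (ChainSet k P δ).Finite := by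
  classical
  apply Set.Finite.subset (Fintype.piFinset fun _ : Fin (k+1) => P).finite_toSet
  intro p hp
  simp only [Finset.mem_coe, Fintype.mem_piFinset]
  exact hp.1

lemma chainCount_eq (k : ℕ) (P : Finset Epl) (δ : Fin k → ℝ) :
    chainCount 2 k P δ = (ChainSet k P δ).ncard := rfl

lemma chainSet_ncard_le (k : ℕ) (P : Finset Epl) (δ : Fin k → ℝ) :
    (ChainSet k P δ).ncard ≤ P.card ^ (k + 1) := by
  classical
  calc (ChainSet k P δ).ncard
      ≤ ((Fintype.piFinset fun _ : Fin (k+1) => P : Finset _) : Set _).ncard :=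
        Set.ncard_le_ncard (by
          intro p hp; simp only [Finset.mem_coe, Fintype.mem_piFinset]; exact hp.1)
          (Fintype.piFinset fun _ : Fin (k+1) => P).finite_toSet
    _ = (Fintype.piFinset fun _ : Fin (k+1) => P).card := Set.ncard_coe_finset _
    _ = P.card ^ (k + 1) := by
        simp [Fintype.card_piFinset]

/-- Key step: two circles with distinct centers meet in ≤ 2 points. -/
lemma step (k : ℕ) (P : Finset Epl) (δ : Fin (k + 3) → ℝ) :
    (ChainSet (k + 3) P δ).ncard ≤
      2 * ((PairSet P (δ ⟨k + 2, by omega⟩)).ncard *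
        (ChainSet k P (fun j => δ ⟨j.1, by omega⟩)).ncard) := by
  classical
  set δ' : Fin k → ℝ := fun j => δ ⟨j.1, by omega⟩ with hδ'
  set r : ℝ := δ ⟨k + 2, by omega⟩ with hr
  set f : (Fin (k + 4) → Epl) → (Fin (k + 1) → Epl) × (Epl × Epl) :=
    fun p => (fun i => p ⟨i.1, by omega⟩, (p ⟨k + 2, by omega⟩, p ⟨k + 3, by omega⟩)) with hf
  have hclaim := ncard_le_mul_of_fibers (chainSet_finite (k+3) P δ) f
    ((chainSet_finite k P δ').toFinset ×ˢ (pairSet_finite P r).toFinset)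
    (m := 2) ?_ ?_
  · calc (ChainSet (k+3) P δ).ncard ≤ _ := hclaim
      _ = 2 * ((PairSet P r).ncard * (ChainSet k P δ').ncard) := by
        rw [Finset.card_product, ← Set.ncard_eq_toFinset_card _ (chainSet_finite k P δ'),
          ← Set.ncard_eq_toFinset_card _ (pairSet_finite P r)]
        ring
  · -- maps to
    intro p hp
    obtain ⟨hmem, hinj, hdist⟩ := hp
    rw [Finset.mem_product]
    constructor
    · rw [Set.Finite.mem_toFinset]
      refine ⟨fun i => hmem _, ?_, ?_⟩
      · intro i i' h
        have := hinj h
        exact Fin.ext (by simpa using congrArg Fin.val this)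
      · intro j
        exact hdist ⟨j.1, by omega⟩
    · rw [Set.Finite.mem_toFinset]
      exact ⟨hmem _, hmem _, hdist ⟨k + 2, by omega⟩⟩
  · -- fibers have ≤ 2 elements
    intro b
    set F : Set (Fin (k + 4) → Epl) := {p ∈ ChainSet (k+3) P δ | f p = b} with hF
    have hFfin : F.Finite := (chainSet_finite (k+3) P δ).subset (fun p hp => hp.1)
    -- determination: an element of the fiber is determined by its value at k+1
    have key : ∀ p ∈ F, ∀ p' ∈ F, p ⟨k + 1, by omega⟩ = p' ⟨k + 1, by omega⟩ → p = p' := by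
      rintro p ⟨-, hp2⟩ p' ⟨-, hp'2⟩ hmid
      have hfst : ∀ i : Fin (k + 1), p ⟨i.1, by omega⟩ = p' ⟨i.1, by omega⟩ := by
        intro i
        have := congrArg Prod.fst (hp2.trans hp'2.symm)
        exact congrFun this i
      have hsnd1 : p ⟨k + 2, by omega⟩ = p' ⟨k + 2, by omega⟩ :=
        congrArg (fun x => x.2.1) (hp2.trans hp'2.symm)
      have hsnd2 : p ⟨k + 3, by omega⟩ = p' ⟨k + 3, by omega⟩ :=
        congrArg (fun x => x.2.2) (hp2.trans hp'2.symm)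
      funext i
      rcases i with ⟨v, hv⟩
      rcases Nat.lt_or_ge v (k + 1) with h | h
      · exact hfst ⟨v, h⟩
      · rcases (show v = k + 1 ∨ v = k + 2 ∨ v = k + 3 by omega) with rfl | rfl | rfl
        · exact hmid
        · exact hsnd1
        · exact hsnd2
    rcases F.eq_empty_or_nonempty with hE | ⟨p₀, hp₀⟩
    · simp [hE]
    by_cases hall : ∀ p ∈ F, p ⟨k + 1, by omega⟩ = p₀ ⟨k + 1, by omega⟩
    · have : F ⊆ {p₀} := fun p hp => key p hp p₀ hp₀ (hall p hp)
      calc F.ncard ≤ ({p₀} : Set _).ncard := Set.ncard_le_ncard this (Set.finite_singleton _)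
        _ ≤ 2 := by simp
    · push_neg at hall
      obtain ⟨p₁, hp₁, hne⟩ := hall
      -- common centers
      have hcommon : ∀ p ∈ F, p ⟨k, by omega⟩ = b.1 ⟨k, by omega⟩ ∧ p ⟨k + 2, by omega⟩ = b.2.1 := by
        rintro p ⟨-, hp2⟩
        constructor
        · exact congrFun (congrArg Prod.fst hp2) ⟨k, by omega⟩
        · exact congrArg (fun x => x.2.1) hp2
      set c₁ : Epl := b.1 ⟨k, by omega⟩
      set c₂ : Epl := b.2.1
      have hc : c₁ ≠ c₂ := by
        obtain ⟨h1, h2⟩ := hcommon p₀ hp₀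
        rw [← h1, ← h2]
        intro h
        have := hp₀.1.2.1 h
        simp at this
      have hd1 : ∀ p ∈ F, dist (p ⟨k + 1, by omega⟩) c₁ = δ ⟨k, by omega⟩ := by
        intro p hp
        rw [← (hcommon p hp).1, dist_comm]
        exact hp.1.2.2 ⟨k, by omega⟩
      have hd2 : ∀ p ∈ F, dist (p ⟨k + 1, by omega⟩) c₂ = δ ⟨k + 1, by omega⟩ := by
        intro p hp
        rw [← (hcommon p hp).2]
        exact hp.1.2.2 ⟨k + 1, by omega⟩
      have hsub : F ⊆ {p₀, p₁} := by
        intro p hp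
        have h2d : Module.finrank ℝ Epl = 2 := by simp
        have := EuclideanGeometry.eq_of_dist_eq_of_dist_eq_of_finrank_eq_two h2d hc hne.symm
          (hd1 p₀ hp₀) (hd1 p₁ hp₁) (hd1 p hp) (hd2 p₀ hp₀) (hd2 p₁ hp₁) (hd2 p hp)
        rcases this with h | h
        · left; exact key p hp p₀ hp₀ h
        · right; exact key p hp p₁ hp₁ h
      calc F.ncard ≤ ({p₀, p₁} : Set _).ncard :=
            Set.ncard_le_ncard hsub ((Set.finite_singleton p₁).insert p₀)
        _ ≤ 2 := by
            refine le_trans (Set.ncard_insert_le _ _) ?_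
            simp

lemma bddAbove_u (n : ℕ) : BddAbove {m | ∃ (P : Finset (EuclideanSpace ℝ (Fin 2))) (δ : ℝ),
    P.card = n ∧ 0 < δ ∧
    m = Set.ncard {pq : EuclideanSpace ℝ (Fin 2) × EuclideanSpace ℝ (Fin 2) |
      pq.1 ∈ P ∧ pq.2 ∈ P ∧ dist pq.1 pq.2 = δ}} := by
  refine ⟨n * n, ?_⟩
  rintro m ⟨P, δ, hcard, -, rfl⟩
  exact hcard ▸ pairSet_ncard_le P δ

lemma bddAbove_c (k n : ℕ) : BddAbove {m | ∃ (P : Finset (EuclideanSpace ℝ (Fin 2)))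
    (δ : Fin k → ℝ), P.card = n ∧ (∀ j, 0 < δ j) ∧ m = chainCount 2 k P δ} := by
  refine ⟨n ^ (k + 1), ?_⟩
  rintro m ⟨P, δ, hcard, -, rfl⟩
  exact hcard ▸ chainSet_ncard_le k P δ

lemma maxChains_step (k n : ℕ) :
    maxChains 2 (k + 3) n ≤ 2 * (maxUnitDist 2 n * maxChains 2 k n) := by
  apply csSup_le'
  rintro m ⟨P, δ, hcard, hpos, rfl⟩
  rw [chainCount_eq]
  refine le_trans (step k P δ) (Nat.mul_le_mul_left 2 (Nat.mul_le_mul ?_ ?_))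
  · exact le_csSup (bddAbove_u n) ⟨P, _, hcard, hpos _, rfl⟩
  · exact le_csSup (bddAbove_c k n) ⟨P, _, hcard, fun j => hpos _, rfl⟩

lemma base (n : ℕ) : maxChains 2 1 n ≤ maxUnitDist 2 n := by
  apply csSup_le'
  rintro m ⟨P, δ, hcard, hpos, rfl⟩
  rw [chainCount_eq]
  refine le_trans ?_ (le_csSup (bddAbove_u n) ⟨P, δ ⟨0, one_pos⟩, hcard, hpos _, rfl⟩)
  refine Set.ncard_le_ncard_of_injOn (fun p => (p ⟨0, by omega⟩, p ⟨1, by omega⟩)) ?_ ?_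
    (pairSet_finite P (δ ⟨0, one_pos⟩))
  · rintro p ⟨hmem, hinj, hdist⟩
    exact ⟨hmem _, hmem _, hdist ⟨0, by omega⟩⟩
  · rintro p - p' - h
    funext i; rcases i with ⟨v, hv⟩
    rcases (show v = 0 ∨ v = 1 by omega) with rfl | rfl
    · exact congrArg Prod.fst h
    · exact congrArg Prod.snd h

lemma main_bound_s11 (t n : ℕ) :
    maxChains 2 (3 * t + 1) n ≤ 2 ^ t * maxUnitDist 2 n ^ (t + 1) := by
  induction t with
  | zero => simpa using base n
  | succ t ih =>
    have he : 3 * (t + 1) + 1 = 3 * t + 1 + 3 := by ring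
    rw [he]
    calc maxChains 2 (3 * t + 1 + 3) n
        ≤ 2 * (maxUnitDist 2 n * maxChains 2 (3 * t + 1) n) := maxChains_step _ n
      _ ≤ 2 * (maxUnitDist 2 n * (2 ^ t * maxUnitDist 2 n ^ (t + 1))) :=
          Nat.mul_le_mul_left _ (Nat.mul_le_mul_left _ ih)
      _ = 2 ^ (t + 1) * maxUnitDist 2 n ^ (t + 1 + 1) := by ring

end

theorem chains_vs_unit_distances_mod3_eq_1 (k : ℕ) (hk : 4 ≤ k) (hmod : k % 3 = 1) :
    ∃ c : ℝ, 0 < c ∧ ∀ n : ℕ,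
      (maxChains 2 k n : ℝ) ≤ c * (maxUnitDist 2 n : ℝ) ^ ((k + 2) / 3) := by
  set t := k / 3 with ht
  refine ⟨(2 : ℝ) ^ t, by positivity, fun n => ?_⟩
  have hk3 : 3 * t + 1 = k := by omega
  have hexp : (k + 2) / 3 = t + 1 := by omega
  have h := main_bound_s11 t n
  rw [hk3] at h
  calc (maxChains 2 k n : ℝ) ≤ ((2 ^ t * maxUnitDist 2 n ^ (t + 1) : ℕ) : ℝ) :=
        Nat.cast_le.mpr h
    _ = (2 : ℝ) ^ t * (maxUnitDist 2 n : ℝ) ^ (t + 1) := by push_cast; ring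
    _ = (2 : ℝ) ^ t * (maxUnitDist 2 n : ℝ) ^ ((k + 2) / 3) := by rw [hexp]
end

section
/- For every integer k ≥ 3 with k ≡ 0 (mod 3), there exists a constant c (depending only on k) such that for every n, C⁽³⁾_k(n) ≤ c · n^{2k/3 + 1}. -/
/-!
Fix a distance `a` and let `codeg(y, y')` count the points of `P` at distance `a` from both `y`
and `y'`. In `ℝ³` no three distinct points have three common points at distance `a`: each of the
two triples lies on a sphere centred at a point of the other, so both span planes, and these
planes have orthogonal directions. Double counting `(x₁, x₂, x₃; y, y')` with every `xᵢ` at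
distance `a` from `y` and `y'` gives `∑ codeg³ ≤ 4n³ + 3 ∑ codeg²`, and Hölder then gives
`Q_a := ∑_{y,y'} codeg(y, y')² ≤ 36 n^{8/3}`. By Cauchy–Schwarz, extending walks by a step of
length `a` multiplies `∑_x g(x)²` by at most `√Q_a`, where `g(x)` counts the walks from `x`.
So the number of walks with step lengths `δ₁, …, δ_k`, which bounds the number of chains, is at
most `n ∏ Q_{δ_j}^{1/4} ≤ 6^{k/2} n^{2k/3 + 1}`.
-/

open Finset Module EuclideanGeometry

section Geometry

variable {V P : Type*} [NormedAddCommGroup V] [InnerProductSpace ℝ V] [MetricSpace P]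
  [NormedAddTorsor V P]

theorem isOrtho_vectorSpan_of_dist_eq {s t : Set P} {a : ℝ}
    (h : ∀ z ∈ s, ∀ w ∈ t, dist z w = a) : vectorSpan ℝ s ⟂ vectorSpan ℝ t := by
  rw [vectorSpan_def, vectorSpan_def, Submodule.isOrtho_span]
  rintro _ ⟨z, hz, z', hz', rfl⟩ _ ⟨w, hw, w', hw', rfl⟩
  exact inner_vsub_vsub_of_dist_eq_of_dist_eq
    (by rw [dist_comm, h z' hz' w' hw', dist_comm, h z' hz' w hw])
    (by rw [dist_comm, h z hz w' hw', dist_comm, h z hz w hw])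

theorem EuclideanGeometry.Cospherical.two_le_finrank_vectorSpan [FiniteDimensional ℝ V]
    {s : Set P} (hs : Cospherical s) (h3 : 2 < s.encard) :
    2 ≤ finrank ℝ (vectorSpan ℝ s) := by
  obtain ⟨t, hts, ht⟩ := Set.exists_subset_encard_eq (Order.add_one_le_of_lt h3)
  obtain ⟨p₁, p₂, p₃, h₁₂, h₁₃, h₂₃, rfl⟩ := Set.encard_eq_three.mp ht
  have hind := (hs.subset hts).affineIndependent_of_ne h₁₂ h₁₃ h₂₃
  calc 2 = finrank ℝ (vectorSpan ℝ (Set.range ![p₁, p₂, p₃])) :=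
        (hind.finrank_vectorSpan (by simp)).symm
    _ ≤ finrank ℝ (vectorSpan ℝ s) :=
        Submodule.finrank_mono (vectorSpan_mono ℝ (hts.trans' (by simp [Set.insert_subset_iff])))

theorem encard_le_two_or_encard_le_two_of_dist_eq [FiniteDimensional ℝ V]
    (hV : finrank ℝ V ≤ 3) {s t : Set P} {a : ℝ} (h : ∀ z ∈ s, ∀ w ∈ t, dist z w = a) :
    s.encard ≤ 2 ∨ t.encard ≤ 2 := by
  by_contra! hst
  obtain ⟨z, hz⟩ : s.Nonempty := Set.nonempty_of_encard_ne_zero (ne_zero_of_lt hst.1)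
  obtain ⟨w, hw⟩ : t.Nonempty := Set.nonempty_of_encard_ne_zero (ne_zero_of_lt hst.2)
  have hs : 2 ≤ finrank ℝ (vectorSpan ℝ s) :=
    Cospherical.two_le_finrank_vectorSpan ⟨w, a, fun z hz => h z hz w hw⟩ hst.1
  have ht : 2 ≤ finrank ℝ (vectorSpan ℝ t) := Cospherical.two_le_finrank_vectorSpan
    ⟨z, a, fun w hw => (dist_comm w z).trans (h z hz w hw)⟩ hst.2
  have hle := Submodule.finrank_mono
    (Submodule.isOrtho_iff_le.mp (isOrtho_vectorSpan_of_dist_eq h))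
  have := (vectorSpan ℝ t).finrank_add_finrank_orthogonal
  omega

end Geometry

theorem sum_sq_pow_three_le {R ι : Type*} [CommSemiring R] [LinearOrder R] [IsStrictOrderedRing R]
    [ExistsAddOfLE R] (s : Finset ι) {f : ι → R} (hf : ∀ i ∈ s, 0 ≤ f i) :
    (∑ i ∈ s, f i ^ 2) ^ 3 ≤ #s * (∑ i ∈ s, f i ^ 3) ^ 2 := by
  set A := ∑ i ∈ s, f i ^ 2
  have hA : 0 ≤ A := sum_nonneg fun i _ => sq_nonneg (f i)
  have hCB : A ^ 2 ≤ (∑ i ∈ s, f i) * ∑ i ∈ s, f i ^ 3 :=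
    sum_sq_le_sum_mul_sum_of_sq_le_mul s hf (fun i hi => pow_nonneg (hf i hi) 3)
      fun i _ => (by ring : (f i ^ 2) ^ 2 = f i * f i ^ 3).le
  have hC : (∑ i ∈ s, f i) ^ 2 ≤ #s * A := sq_sum_le_card_mul_sum_sq
  rcases hA.eq_or_lt with hA0 | hApos
  · rw [← hA0, zero_pow three_ne_zero]
    exact mul_nonneg (Nat.cast_nonneg _) (sq_nonneg _)
  refine le_of_mul_le_mul_right ?_ hApos
  calc A ^ 3 * A = (A ^ 2) ^ 2 := by ring
    _ ≤ ((∑ i ∈ s, f i) * ∑ i ∈ s, f i ^ 3) ^ 2 := pow_le_pow_left₀ (sq_nonneg A) hCB 2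
    _ = (∑ i ∈ s, f i) ^ 2 * (∑ i ∈ s, f i ^ 3) ^ 2 := by ring
    _ ≤ (#s * A) * (∑ i ∈ s, f i ^ 3) ^ 2 := by gcongr; exact sq_nonneg _
    _ = #s * (∑ i ∈ s, f i ^ 3) ^ 2 * A := by ring

section Codegree

variable {α : Type*} (r : α → α → Prop) [DecidableRel r] (P : Finset α)

def codegree (y y' : α) : ℕ := #{x ∈ P | r x y ∧ r x y'}

def codegree₃ (x₁ x₂ x₃ : α) : ℕ := #{y ∈ P | r x₁ y ∧ r x₂ y ∧ r x₃ y}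

def codegreeSqSum : ℕ := ∑ q ∈ P ×ˢ P, codegree r P q.1 q.2 ^ 2

theorem sum_sq_sum_filter_eq (f : α → ℕ) :
    ∑ x ∈ P, (∑ y ∈ P with r x y, f y) ^ 2
      = ∑ q ∈ P ×ˢ P, codegree r P q.1 q.2 * (f q.1 * f q.2) := by
  calc ∑ x ∈ P, (∑ y ∈ P with r x y, f y) ^ 2
      = ∑ x ∈ P, ∑ q ∈ P ×ˢ P, if r x q.1 ∧ r x q.2 then f q.1 * f q.2 else 0 := by
        refine sum_congr rfl fun x _ => ?_
        rw [sq, sum_mul_sum, ← sum_product', ← sum_filter, filter_product]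
    _ = ∑ q ∈ P ×ˢ P, ∑ x ∈ P, if r x q.1 ∧ r x q.2 then f q.1 * f q.2 else 0 := sum_comm
    _ = ∑ q ∈ P ×ˢ P, codegree r P q.1 q.2 * (f q.1 * f q.2) := by
        simp only [← sum_filter, sum_const, smul_eq_mul, codegree]

theorem sum_sq_sum_filter_sq_le (f : α → ℕ) :
    (∑ x ∈ P, (∑ y ∈ P with r x y, f y) ^ 2) ^ 2
      ≤ codegreeSqSum r P * (∑ y ∈ P, f y ^ 2) ^ 2 := by
  rw [sum_sq_sum_filter_eq]
  calc (∑ q ∈ P ×ˢ P, codegree r P q.1 q.2 * (f q.1 * f q.2)) ^ 2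
      ≤ codegreeSqSum r P * ∑ q ∈ P ×ˢ P, (f q.1 * f q.2) ^ 2 := sum_mul_sq_le_sq_mul_sq _ _ _
    _ = codegreeSqSum r P * (∑ y ∈ P, f y ^ 2) ^ 2 := by
        rw [sq (∑ y ∈ P, f y ^ 2), sum_mul_sum, ← sum_product']
        simp only [mul_pow]

theorem codegree_pow_three_eq (q : α × α) :
    codegree r P q.1 q.2 ^ 3 = #{t ∈ P ×ˢ P ×ˢ P | (r t.1 q.1 ∧ r t.2.1 q.1 ∧ r t.2.2 q.1) ∧
      (r t.1 q.2 ∧ r t.2.1 q.2 ∧ r t.2.2 q.2)} := by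
  rw [pow_three, codegree, ← card_product, ← card_product]
  congr 1
  ext ⟨a, b, c⟩
  simp only [mem_product, mem_filter]
  tauto

theorem codegree₃_sq_eq (t : α × α × α) :
    codegree₃ r P t.1 t.2.1 t.2.2 ^ 2 = #{q ∈ P ×ˢ P | (r t.1 q.1 ∧ r t.2.1 q.1 ∧ r t.2.2 q.1) ∧
      (r t.1 q.2 ∧ r t.2.1 q.2 ∧ r t.2.2 q.2)} := by
  rw [sq, codegree₃, ← card_product]
  congr 1
  ext ⟨a, b⟩
  simp only [mem_product, mem_filter]
  tauto

theorem sum_codegree_pow_three_eq :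
    ∑ q ∈ P ×ˢ P, codegree r P q.1 q.2 ^ 3
      = ∑ t ∈ P ×ˢ P ×ˢ P, codegree₃ r P t.1 t.2.1 t.2.2 ^ 2 := by
  simp only [codegree_pow_three_eq, codegree₃_sq_eq]
  exact sum_card_bipartiteAbove_eq_sum_card_bipartiteBelow _

variable {r P}

theorem codegree₃_sq_le [Std.Symm r] [DecidableEq α]
    (hK : ∀ x₁ x₂ x₃, x₁ ≠ x₂ → x₁ ≠ x₃ → x₂ ≠ x₃ → codegree₃ r P x₁ x₂ x₃ ≤ 2) (x₁ x₂ x₃ : α) :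
    codegree₃ r P x₁ x₂ x₃ ^ 2 ≤ 4 + (if x₁ = x₂ then codegree r P x₁ x₃ ^ 2 else 0)
      + (if x₁ = x₃ then codegree r P x₁ x₂ ^ 2 else 0)
      + (if x₂ = x₃ then codegree r P x₁ x₂ ^ 2 else 0) := by
  have h₁₂ : codegree₃ r P x₁ x₂ x₃ ^ 2 ≤ codegree r P x₁ x₂ ^ 2 := Nat.pow_le_pow_left
    (card_le_card (monotone_filter_right P fun _ _ h => ⟨symm_of r h.1, symm_of r h.2.1⟩)) 2
  have h₁₃ : codegree₃ r P x₁ x₂ x₃ ^ 2 ≤ codegree r P x₁ x₃ ^ 2 := Nat.pow_le_pow_left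
    (card_le_card (monotone_filter_right P fun _ _ h => ⟨symm_of r h.1, symm_of r h.2.2⟩)) 2
  by_cases hdistinct : x₁ ≠ x₂ ∧ x₁ ≠ x₃ ∧ x₂ ≠ x₃
  · obtain ⟨e₁₂, e₁₃, e₂₃⟩ := hdistinct
    have := Nat.pow_le_pow_left (hK x₁ x₂ x₃ e₁₂ e₁₃ e₂₃) 2
    simp only [e₁₂, e₁₃, e₂₃, if_false]
    omega
  · split_ifs <;> first | omega | tauto

theorem sum_codegree_pow_three_le [Std.Symm r]
    (hK : ∀ x₁ x₂ x₃, x₁ ≠ x₂ → x₁ ≠ x₃ → x₂ ≠ x₃ → codegree₃ r P x₁ x₂ x₃ ≤ 2) :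
    ∑ q ∈ P ×ˢ P, codegree r P q.1 q.2 ^ 3 ≤ 4 * #P ^ 3 + 3 * codegreeSqSum r P := by
  classical
  rw [sum_codegree_pow_three_eq]
  calc _ ≤ ∑ t ∈ P ×ˢ P ×ˢ P, (4 + (if t.1 = t.2.1 then codegree r P t.1 t.2.2 ^ 2 else 0)
          + (if t.1 = t.2.2 then codegree r P t.1 t.2.1 ^ 2 else 0)
          + (if t.2.1 = t.2.2 then codegree r P t.1 t.2.1 ^ 2 else 0)) :=
        sum_le_sum fun t _ => codegree₃_sq_le hK _ _ _
    _ = 4 * #P ^ 3 + 3 * codegreeSqSum r P := by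
        simp [sum_add_distrib, sum_product, sum_ite_eq, codegreeSqSum]
        ring

theorem codegreeSqSum_pow_three_le [Std.Symm r]
    (hK : ∀ x₁ x₂ x₃, x₁ ≠ x₂ → x₁ ≠ x₃ → x₂ ≠ x₃ → codegree₃ r P x₁ x₂ x₃ ≤ 2) :
    codegreeSqSum r P ^ 3 ≤ 6 ^ 6 * #P ^ 8 := by
  set Q := codegreeSqSum r P
  set C := ∑ q ∈ P ×ˢ P, codegree r P q.1 q.2 ^ 3
  set n := #P
  have hHolder : Q ^ 3 ≤ n ^ 2 * C ^ 2 := by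
    have h := sum_sq_pow_three_le (P ×ˢ P) (f := fun q => codegree r P q.1 q.2)
      fun _ _ => Nat.zero_le _
    rwa [Nat.cast_id, card_product, ← sq] at h
  have hC : C ≤ 4 * n ^ 3 + 3 * Q := sum_codegree_pow_three_le hK
  rcases le_total (3 * Q) (4 * n ^ 3) with hQ | hQ
  · calc Q ^ 3 ≤ n ^ 2 * (8 * n ^ 3) ^ 2 := hHolder.trans (by gcongr; omega)
      _ ≤ 6 ^ 6 * n ^ 8 := by ring_nf; omega
  · have hQn : Q ≤ 36 * n ^ 2 := by
      rcases Q.eq_zero_or_pos with hQ0 | hQpos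
      · omega
      refine le_of_mul_le_mul_right ?_ (pow_pos hQpos 2)
      calc Q * Q ^ 2 ≤ n ^ 2 * (6 * Q) ^ 2 := by
            rw [← pow_succ']; exact hHolder.trans (by gcongr; omega)
        _ = 36 * n ^ 2 * Q ^ 2 := by ring
    calc Q ^ 3 ≤ (36 * n ^ 2) ^ 3 := by gcongr
      _ ≤ 6 ^ 6 * n ^ 8 := by
        rcases n.eq_zero_or_pos with hn | hn
        · simp [hn]
        ring_nf; gcongr; omega

end Codegree

section Walks

variable {α : Type*} [DecidableEq α] (P : Finset α)

def walks {k : ℕ} (r : Fin k → α → α → Prop) [∀ j, DecidableRel (r j)] (x : α) :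
    Finset (Fin (k + 1) → α) :=
  {p ∈ Fintype.piFinset fun _ => P | p 0 = x ∧ ∀ j, r j (p j.castSucc) (p j.succ)}

theorem card_walks_zero_le (r : Fin 0 → α → α → Prop) [∀ j, DecidableRel (r j)] (x : α) :
    #(walks P r x) ≤ 1 :=
  card_le_one.mpr fun p hp q hq => by
    have hp0 := (mem_filter.mp hp).2.1
    have hq0 := (mem_filter.mp hq).2.1
    funext i
    rw [Fin.fin_one_eq_zero i, hp0, hq0]

theorem walks_succ_subset {k : ℕ} (r : Fin (k + 1) → α → α → Prop) [∀ j, DecidableRel (r j)]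
    (x : α) : walks P r x ⊆
      {y ∈ P | r 0 x y}.biUnion fun y => (walks P (fun j => r j.succ) y).image (Fin.cons x) := by
  intro p hp
  simp only [walks, mem_filter, Fintype.mem_piFinset] at hp
  obtain ⟨hP, rfl, hr⟩ := hp
  simp only [walks, mem_biUnion, mem_image, mem_filter, Fintype.mem_piFinset]
  refine ⟨p 1, ⟨hP 1, hr 0⟩, Fin.tail p, ⟨fun i => hP _, rfl, fun j => ?_⟩, Fin.cons_self_tail p⟩
  have := hr j.succ
  simp only [Fin.tail]
  rwa [← Fin.succ_castSucc] at this

theorem card_walks_succ_le {k : ℕ} (r : Fin (k + 1) → α → α → Prop) [∀ j, DecidableRel (r j)]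
    (x : α) : #(walks P r x) ≤ ∑ y ∈ P with r 0 x y, #(walks P (fun j => r j.succ) y) :=
  (card_le_card (walks_succ_subset P r x)).trans <| card_biUnion_le.trans <|
    sum_le_sum fun _ _ => card_image_le

theorem sum_card_walks_sq_sq_le : ∀ {k : ℕ} (r : Fin k → α → α → Prop) [∀ j, DecidableRel (r j)],
    (∑ x ∈ P, #(walks P r x) ^ 2) ^ 2 ≤ (∏ j, codegreeSqSum (r j) P) * #P ^ 2
  | 0, r, _ => by
    have : ∑ x ∈ P, #(walks P r x) ^ 2 ≤ #P := by
      simpa using sum_le_sum fun x (_ : x ∈ P) =>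
        pow_le_one₀ (Nat.zero_le _) (card_walks_zero_le P r x)
    simpa using Nat.pow_le_pow_left this 2
  | k + 1, r, _ => by
    calc (∑ x ∈ P, #(walks P r x) ^ 2) ^ 2
        ≤ (∑ x ∈ P, (∑ y ∈ P with r 0 x y, #(walks P (fun j => r j.succ) y)) ^ 2) ^ 2 := by
          gcongr with x; exact card_walks_succ_le P r x
      _ ≤ codegreeSqSum (r 0) P * (∑ y ∈ P, #(walks P (fun j => r j.succ) y) ^ 2) ^ 2 :=
          sum_sq_sum_filter_sq_le _ _ _
      _ ≤ codegreeSqSum (r 0) P * ((∏ j : Fin k, codegreeSqSum (r j.succ) P) * #P ^ 2) := by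
          gcongr; exact sum_card_walks_sq_sq_le _
      _ = (∏ j, codegreeSqSum (r j) P) * #P ^ 2 := by
          rw [Fin.prod_univ_succ, mul_assoc]

theorem ncard_le_sum_card_walks {k : ℕ} (r : Fin k → α → α → Prop) [∀ j, DecidableRel (r j)]
    {S : Set (Fin (k + 1) → α)}
    (hS : ∀ p ∈ S, (∀ i, p i ∈ P) ∧ ∀ j, r j (p j.castSucc) (p j.succ)) :
    S.ncard ≤ ∑ x ∈ P, #(walks P r x) := by
  calc S.ncard ≤ (↑(P.biUnion (walks P r)) : Set (Fin (k + 1) → α)).ncard := by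
        refine Set.ncard_le_ncard (fun p hp => ?_) (finite_toSet _)
        obtain ⟨hP, hr⟩ := hS p hp
        simp only [coe_biUnion, Set.mem_iUnion, mem_coe, walks, mem_filter, Fintype.mem_piFinset]
        exact ⟨p 0, hP 0, hP, rfl, hr⟩
    _ = #(P.biUnion (walks P r)) := Set.ncard_coe_finset _
    _ ≤ ∑ x ∈ P, #(walks P r x) := card_biUnion_le

end Walks

instance {α : Type*} [PseudoMetricSpace α] (a : ℝ) : Std.Symm fun x y : α => dist x y = a :=
  ⟨fun x y h => (dist_comm y x).trans h⟩

theorem codegree₃_dist_le_two {V : Type*} [NormedAddCommGroup V] [InnerProductSpace ℝ V]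
    [FiniteDimensional ℝ V] (hV : finrank ℝ V ≤ 3) (P : Finset V) (a : ℝ) {x₁ x₂ x₃ : V}
    (h₁₂ : x₁ ≠ x₂) (h₁₃ : x₁ ≠ x₃) (h₂₃ : x₂ ≠ x₃) :
    codegree₃ (fun x y => dist x y = a) P x₁ x₂ x₃ ≤ 2 := by
  have h := encard_le_two_or_encard_le_two_of_dist_eq hV (a := a) (s := {x₁, x₂, x₃})
    (t := ↑{y ∈ P | dist x₁ y = a ∧ dist x₂ y = a ∧ dist x₃ y = a}) (by simp +contextual)
  rw [Set.encard_eq_three.mpr ⟨x₁, x₂, x₃, h₁₂, h₁₃, h₂₃, rfl⟩, Set.encard_coe_eq_coe_finsetCard]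
    at h
  norm_cast at h
  exact h.resolve_left (by norm_num)

theorem chainCount_pow_four_le (d k : ℕ) (P : Finset (EuclideanSpace ℝ (Fin d)))
    (δ : Fin k → ℝ) :
    chainCount d k P δ ^ 4 ≤ #P ^ 4 * ∏ j, codegreeSqSum (fun x y => dist x y = δ j) P := by
  classical
  set r : Fin k → EuclideanSpace ℝ (Fin d) → EuclideanSpace ℝ (Fin d) → Prop :=
    fun j x y => dist x y = δ j
  have hchain : chainCount d k P δ ≤ ∑ x ∈ P, #(walks P r x) :=
    ncard_le_sum_card_walks P r fun p hp => ⟨hp.1, hp.2.2⟩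
  calc chainCount d k P δ ^ 4 ≤ ((∑ x ∈ P, #(walks P r x)) ^ 2) ^ 2 := by
        rw [← pow_mul]; gcongr
    _ ≤ (#P * ∑ x ∈ P, #(walks P r x) ^ 2) ^ 2 := by gcongr; exact sq_sum_le_card_mul_sum_sq
    _ ≤ #P ^ 2 * ((∏ j, codegreeSqSum (r j) P) * #P ^ 2) := by
        rw [mul_pow]; gcongr; exact sum_card_walks_sq_sq_le P r
    _ = #P ^ 4 * ∏ j, codegreeSqSum (r j) P := by ring

theorem chainCount_le (k : ℕ) (hmod : k % 3 = 0) (P : Finset (EuclideanSpace ℝ (Fin 3)))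
    (δ : Fin k → ℝ) : chainCount 3 k P δ ≤ 6 ^ k * #P ^ (2 * k / 3 + 1) := by
  have hQ (j : Fin k) : codegreeSqSum (fun x y => dist x y = δ j) P ^ 3 ≤ 6 ^ 6 * #P ^ 8 :=
    codegreeSqSum_pow_three_le fun _ _ _ =>
      codegree₃_dist_le_two finrank_euclideanSpace_fin.le P (δ j)
  refine (Nat.pow_le_pow_iff_left (n := 12) (by norm_num)).mp ?_
  calc chainCount 3 k P δ ^ 12 = (chainCount 3 k P δ ^ 4) ^ 3 := by ring
    _ ≤ (#P ^ 4 * ∏ j, codegreeSqSum (fun x y => dist x y = δ j) P) ^ 3 := by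
        gcongr; exact chainCount_pow_four_le 3 k P δ
    _ = #P ^ 12 * ∏ j, codegreeSqSum (fun x y => dist x y = δ j) P ^ 3 := by
        rw [mul_pow, prod_pow]; ring
    _ ≤ #P ^ 12 * (6 ^ 6 * #P ^ 8) ^ k := by
        gcongr; exact (prod_le_pow_card _ _ _ fun j _ => hQ j).trans_eq (by simp)
    _ = 6 ^ (6 * k) * #P ^ (8 * k + 12) := by rw [mul_pow, ← pow_mul, ← pow_mul]; ring
    _ ≤ 6 ^ (12 * k) * #P ^ ((2 * k / 3 + 1) * 12) := by
        rw [show (2 * k / 3 + 1) * 12 = 8 * k + 12 by omega]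
        gcongr <;> omega
    _ = (6 ^ k * #P ^ (2 * k / 3 + 1)) ^ 12 := by ring

theorem chains_upper_R3_mod3_eq_0_general (k : ℕ) (hmod : k % 3 = 0) :
    ∃ c : ℝ, 0 < c ∧ ∀ n : ℕ,
      (maxChains 3 k n : ℝ) ≤ c * (n : ℝ) ^ (2 * k / 3 + 1) := by
  refine ⟨6 ^ k, by positivity, fun n => ?_⟩
  have h : maxChains 3 k n ≤ 6 ^ k * n ^ (2 * k / 3 + 1) := by
    refine csSup_le' ?_
    rintro _ ⟨P, δ, rfl, -, rfl⟩
    exact chainCount_le k hmod P δ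
  exact_mod_cast h

theorem chains_upper_R3_mod3_eq_0 (k : ℕ) (hk : 3 ≤ k) (hmod : k % 3 = 0) :
    ∃ c : ℝ, 0 < c ∧ ∀ n : ℕ,
      (maxChains 3 k n : ℝ) ≤ c * (n : ℝ) ^ (2 * k / 3 + 1) :=
  chains_upper_R3_mod3_eq_0_general k hmod
end
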